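/- arXiv:2510.23333 — 4 statements merged into one kernel-verified Lean document; each statement's English description precedes it below -/
import Mathlib

section
/- Let D be a positive integer with D ≡ 1 (mod 8) that is not a perfect square. Then the alternating weighted sum ∑_{0 < e < √D, e odd} (-1)^((e-1)/2) · e · σ₁((D - e²)/8) equals 0, where σ₁(n) denotes the sum of positive divisors of n. -/
/-!
Jacobi's identity `∏_{n ≥ 1} (1 - qⁿ)³ = ∑_{k ≥ 0} (-1)ᵏ (2k+1) q^{k(k+1)/2}` together with the
logarithmic derivative `q (d/dq) log ∏ (1 - qⁿ)³ = -3 ∑_{n ≥ 1} σ(n) qⁿ` gives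
`n a(n) = -3 ∑_{i ≤ n} σ(i) a(n - i)` for the coefficients `a` of the product. For `D = 8n + 1`
not a square, `n` is not triangular, so `a(n) = 0`, and `e = 2k + 1` turns the right-hand side
into the sum of the theorem.

Jacobi's identity is proved modulo `q^{m+1}` for the partial products `(q;q)_m`. Writing
`Y = z + z⁻¹`, the product `∏_{i<m} (1 - q^{i+1} z)(1 - q^{i+1} z⁻¹)` equals
`∑_{k ≤ m} (-1)ᵏ q^{k(k+1)/2} [2m+1, m-k]_q W_k(Y)` with `W_k(z + z⁻¹) = z⁻ᵏ + ⋯ + zᵏ`, by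
induction on `m` using recurrences of the Gaussian binomials. At `z = 1`, where `W_k(2) = 2k + 1`,
the product is `(q;q)_m²`; multiplying by `(q;q)_m` and using
`(q;q)_m [2m+1, m-k]_q ≡ 1 (mod q^{m-k+1})` gives the congruence.
-/

open PowerSeries Finset

noncomputable section

def tri (k : ℕ) : ℕ := k * (k + 1) / 2

lemma two_mul_tri (k : ℕ) : 2 * tri k = k * (k + 1) :=
  Nat.mul_div_cancel' (Nat.even_mul_succ_self k).two_dvd

lemma tri_succ (k : ℕ) : tri (k + 1) = tri k + (k + 1) := by
  have := two_mul_tri k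
  have := two_mul_tri (k + 1)
  nlinarith

lemma le_tri (k : ℕ) : k ≤ tri k := by
  have := two_mul_tri k
  nlinarith

lemma two_mul_add_one_sq (k : ℕ) : (2 * k + 1) ^ 2 = 8 * tri k + 1 := by
  have := two_mul_tri k
  nlinarith

section ChebyshevW

open Polynomial.Chebyshev

variable (A : Type*) [CommRing A]

/-- The rescaled Chebyshev polynomial of the fourth kind, `chebyshevW A n (z + z⁻¹) = z⁻ⁿ + ⋯ + zⁿ`
(for `n ≥ 0`). -/
def chebyshevW (n : ℤ) : Polynomial A := S A n + S A (n - 1)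

lemma X_mul_chebyshevW (n : ℤ) :
    Polynomial.X * chebyshevW A n = chebyshevW A (n + 1) + chebyshevW A (n - 1) := by
  have h₁ := S_add_one A n
  have h₂ := S_add_one A (n - 1)
  rw [sub_add_cancel] at h₂
  simp only [chebyshevW, add_sub_cancel_right]
  linear_combination -h₁ - h₂

lemma chebyshevW_zero : chebyshevW A 0 = 1 := by simp [chebyshevW]

lemma chebyshevW_neg_one : chebyshevW A (-1) = -1 := by
  simp [chebyshevW, show (-1 : ℤ) - 1 = -2 by norm_num]

lemma eval_two_chebyshevW (n : ℤ) : (chebyshevW A n).eval 2 = 2 * n + 1 := by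
  simp only [chebyshevW, Polynomial.eval_add, S_eval_two]; push_cast; ring

variable {A}

def mulXCoeff (a : ℕ → A) : ℕ → A
  | 0 => a 1 - a 0
  | k + 1 => a k + a (k + 2)

lemma X_mul_sum_chebyshevW (a : ℕ → A) (N : ℕ) :
    Polynomial.X * ∑ k ∈ range (N + 1), Polynomial.C (a k) * chebyshevW A k
      = ∑ k ∈ range (N + 1), Polynomial.C (mulXCoeff a k) * chebyshevW A k
        + Polynomial.C (a N) * chebyshevW A (N + 1)
        - Polynomial.C (a (N + 1)) * chebyshevW A N := by
  induction N with
  | zero =>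
    have := X_mul_chebyshevW A 0
    simp only [zero_add, zero_sub, chebyshevW_neg_one, chebyshevW_zero] at this
    simp only [zero_add, range_one, sum_singleton, mulXCoeff, Nat.cast_zero, chebyshevW_zero,
      map_sub]
    linear_combination Polynomial.C (a 0) * this
  | succ N ih =>
    have := X_mul_chebyshevW A (N + 1)
    rw [sum_range_succ, mul_add, ih, sum_range_succ _ (N + 1)]
    push_cast at this ⊢
    simp only [mulXCoeff, map_add, add_sub_cancel_right] at this ⊢
    linear_combination Polynomial.C (a (N + 1)) * this

end ChebyshevW

section PowerSeries

variable {R : Type*} [CommRing R]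

lemma dvd_mul_sub_one {d x y : R} (hx : d ∣ x - 1) (hy : d ∣ y - 1) :
    d ∣ x * y - 1 := by
  have : x * y - 1 = (x - 1) * y + (y - 1) := by ring
  rw [this]
  exact dvd_add (dvd_mul_of_dvd_left hx y) hy

lemma isUnit_one_sub_X_pow {j : ℕ} (hj : j ≠ 0) : IsUnit (1 - X ^ j : R⟦X⟧) := by
  simp [isUnit_iff_constantCoeff, zero_pow hj]

lemma coeff_eq_of_X_pow_dvd_sub {N n : ℕ} {f g : R⟦X⟧}
    (h : X ^ N ∣ f - g) (hn : n < N) : coeff n f = coeff n g :=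
  sub_eq_zero.mp (map_sub (coeff n) f g ▸ X_pow_dvd_iff.mp h n hn)

lemma expand_mk_one_mul_one_sub_X_pow {j : ℕ} (hj : j ≠ 0) :
    expand j hj (mk 1 : R⟦X⟧) * (1 - X ^ j) = 1 := by
  simpa [expand_X] using congrArg (expand j hj) (mk_one_mul_one_sub_eq_one (S := R))

lemma coeff_X_mul_derivative (f : R⟦X⟧) (n : ℕ) : coeff n (X * d⁄dX R f) = n * coeff n f := by
  rcases n with _ | n
  · simp
  · rw [coeff_succ_X_mul, coeff_derivative, mul_comm]
    push_cast
    rfl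

end PowerSeries

def qPoch (n : ℕ) : ℤ⟦X⟧ := ∏ i ∈ range n, (1 - X ^ (i + 1))

lemma qPoch_succ (n : ℕ) : qPoch (n + 1) = qPoch n * (1 - X ^ (n + 1)) := prod_range_succ _ _

lemma isUnit_qPoch (n : ℕ) : IsUnit (qPoch n) :=
  IsUnit.prod_iff.mpr fun i _ ↦ isUnit_one_sub_X_pow i.succ_ne_zero

lemma qPoch_mul_inverse (n : ℕ) : qPoch n * Ring.inverse (qPoch n) = 1 :=
  Ring.mul_inverse_cancel _ (isUnit_qPoch n)

lemma inverse_qPoch (n : ℕ) :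
    Ring.inverse (qPoch n) = (1 - X ^ (n + 1)) * Ring.inverse (qPoch (n + 1)) := by
  calc Ring.inverse (qPoch n)
      = Ring.inverse (qPoch n) * (qPoch (n + 1) * Ring.inverse (qPoch (n + 1))) := by
        rw [qPoch_mul_inverse, mul_one]
    _ = Ring.inverse (qPoch n) * qPoch n * (1 - X ^ (n + 1)) * Ring.inverse (qPoch (n + 1)) := by
        rw [qPoch_succ]; ring
    _ = _ := by rw [Ring.inverse_mul_cancel _ (isUnit_qPoch n), one_mul]

/-- The Gaussian binomial coefficient `[2m+1, m-k]_q`, set to `0` for `k > m`. -/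
def centralQBinom (m k : ℕ) : ℤ⟦X⟧ :=
  if k ≤ m then qPoch (2 * m + 1) * Ring.inverse (qPoch (m - k)) * Ring.inverse (qPoch (m + k + 1))
  else 0

lemma centralQBinom_of_lt {m k : ℕ} (h : m < k) : centralQBinom m k = 0 := if_neg (by omega)

lemma centralQBinom_self (m : ℕ) : centralQBinom m m = 1 := by
  rw [centralQBinom, if_pos le_rfl, Nat.sub_self, show m + m + 1 = 2 * m + 1 by ring,
    mul_right_comm, qPoch_mul_inverse, one_mul]
  simp [qPoch]

lemma centralQBinom_succ_mul (m k : ℕ) :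
    centralQBinom m (k + 1) * (1 - X ^ (m + k + 2)) = centralQBinom m k * (1 - X ^ (m - k)) := by
  rcases lt_trichotomy k m with hk | rfl | hk
  · obtain ⟨s, hs⟩ : ∃ s, m - k = s + 1 := ⟨m - k - 1, by omega⟩
    rw [centralQBinom, centralQBinom, if_pos (by omega), if_pos hk.le,
      show m - (k + 1) = s by omega, hs, show m + (k + 1) + 1 = m + k + 1 + 1 by ring,
      inverse_qPoch s, inverse_qPoch (m + k + 1)]
    ring
  · simp [centralQBinom_of_lt]
  · simp [centralQBinom_of_lt hk, centralQBinom_of_lt (Nat.lt_succ_of_lt hk)]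

lemma centralQBinom_succ_succ_mul (m k : ℕ) :
    centralQBinom (m + 1) (k + 1) * (1 - X ^ (m + k + 2)) * (1 - X ^ (m + k + 3))
      = centralQBinom m k * (1 - X ^ (2 * m + 2)) * (1 - X ^ (2 * m + 3)) := by
  rcases le_or_gt k m with hk | hk
  · rw [centralQBinom, centralQBinom, if_pos (by omega), if_pos hk,
      show m + 1 - (k + 1) = m - k by omega, show 2 * (m + 1) + 1 = 2 * m + 1 + 1 + 1 by ring,
      qPoch_succ, qPoch_succ, inverse_qPoch (m + k + 1), inverse_qPoch (m + k + 1 + 1),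
      show m + 1 + (k + 1) + 1 = m + k + 1 + 1 + 1 by ring]
    ring
  · simp [centralQBinom_of_lt hk, centralQBinom_of_lt (Nat.succ_lt_succ hk)]

lemma centralQBinom_succ_left_mul {m k : ℕ} (hk : k ≤ m) :
    centralQBinom (m + 1) k * (1 - X ^ (m - k + 1)) * (1 - X ^ (m + k + 2))
      = centralQBinom m k * (1 - X ^ (2 * m + 2)) * (1 - X ^ (2 * m + 3)) := by
  rw [centralQBinom, centralQBinom, if_pos (by omega), if_pos hk,
    show m + 1 - k = m - k + 1 by omega, show 2 * (m + 1) + 1 = 2 * m + 1 + 1 + 1 by ring,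
    qPoch_succ, qPoch_succ, inverse_qPoch (m - k), inverse_qPoch (m + k + 1),
    show m + 1 + k + 1 = m + k + 1 + 1 by ring]
  ring

theorem centralQBinom_succ_zero (m : ℕ) :
    centralQBinom (m + 1) 0
      = (1 + X ^ (m + 1) + X ^ (2 * m + 2)) * centralQBinom m 0
        + X ^ (m + 2) * centralQBinom m 1 := by
  have hleft := centralQBinom_succ_left_mul (Nat.zero_le m)
  have hsucc := centralQBinom_succ_mul m 0
  simp only [Nat.sub_zero, add_zero, zero_add] at hleft hsucc
  apply ((isUnit_one_sub_X_pow (by omega : m + 1 ≠ 0)).mul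
    (isUnit_one_sub_X_pow (by omega : m + 2 ≠ 0))).mul_right_cancel
  linear_combination hleft - X ^ (m + 2) * (1 - X ^ (m + 1)) * hsucc

theorem centralQBinom_succ_succ {m k : ℕ} (hk : k ≤ m) :
    centralQBinom (m + 1) (k + 1) = (1 + X ^ (2 * m + 2)) * centralQBinom m (k + 1)
      + X ^ (m - k) * centralQBinom m k + X ^ (m + k + 3) * centralQBinom m (k + 2) := by
  rcases hk.eq_or_lt with rfl | hk
  · simp [centralQBinom_self, centralQBinom_of_lt]
  obtain ⟨s, rfl⟩ : ∃ s, m = k + s + 1 := ⟨m - k - 1, by omega⟩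
  have h₂ := centralQBinom_succ_succ_mul (k + s + 1) k
  have h₁ := centralQBinom_succ_mul (k + s + 1) k
  have h₁' := centralQBinom_succ_mul (k + s + 1) (k + 1)
  rw [show k + s + 1 - k = s + 1 by omega] at h₁ ⊢
  rw [show k + s + 1 - (k + 1) = s by omega] at h₁'
  -- after multiplying by these units, the ratio relations make every term a multiple of
  -- `centralQBinom (k + s + 1) k`, leaving a polynomial identity in `q`
  apply ((isUnit_one_sub_X_pow (by omega : 2 * k + s + 3 ≠ 0)).mul
    (isUnit_one_sub_X_pow (by omega : 2 * k + s + 4 ≠ 0))).mul_right_cancel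
  linear_combination h₂
    - ((1 + X ^ (2 * k + 2 * s + 4)) * (1 - X ^ (2 * k + s + 4))
      + X ^ (2 * k + s + 4) * (1 - X ^ s)) * h₁
    - X ^ (2 * k + s + 4) * (1 - X ^ (2 * k + s + 3)) * h₁'

def jacobiTerm (m k : ℕ) : ℤ⟦X⟧ := (-1) ^ k * X ^ tri k * centralQBinom m k

lemma jacobiTerm_of_lt {m k : ℕ} (h : m < k) : jacobiTerm m k = 0 := by
  simp [jacobiTerm, centralQBinom_of_lt h]

lemma jacobiTerm_succ {m k : ℕ} (hk : k ≤ m + 1) :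
    jacobiTerm (m + 1) k
      = (1 + X ^ (2 * m + 2)) * jacobiTerm m k - X ^ (m + 1) * mulXCoeff (jacobiTerm m) k := by
  rcases k with _ | k
  · simp only [jacobiTerm, mulXCoeff, centralQBinom_succ_zero, tri]
    ring
  · obtain ⟨t, rfl⟩ := Nat.exists_eq_add_of_le (Nat.le_of_succ_le_succ hk)
    simp only [jacobiTerm, mulXCoeff, centralQBinom_succ_succ (Nat.le_add_right k t), tri_succ,
      Nat.add_sub_cancel_left]
    ring

theorem prod_eq_sum_jacobiTerm_mul_chebyshevW (m : ℕ) :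
    ∏ i ∈ range m, (Polynomial.C (1 + X ^ (2 * i + 2)) - Polynomial.C (X ^ (i + 1)) * Polynomial.X)
      = ∑ k ∈ range (m + 1), Polynomial.C (jacobiTerm m k) * chebyshevW ℤ⟦X⟧ k := by
  induction m with
  | zero => simp [jacobiTerm, tri, centralQBinom_self, chebyshevW_zero]
  | succ m ih =>
    set S := ∑ k ∈ range (m + 1 + 1), Polynomial.C (jacobiTerm m k) * chebyshevW ℤ⟦X⟧ k
    have hS : ∑ k ∈ range (m + 1), Polynomial.C (jacobiTerm m k) * chebyshevW ℤ⟦X⟧ k = S := by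
      simp [S, sum_range_succ _ (m + 1), jacobiTerm_of_lt (Nat.lt_succ_self m)]
    have hY : Polynomial.X * S = ∑ k ∈ range (m + 1 + 1),
        Polynomial.C (mulXCoeff (jacobiTerm m) k) * chebyshevW ℤ⟦X⟧ k := by
      simpa [jacobiTerm_of_lt] using X_mul_sum_chebyshevW (jacobiTerm m) (m + 1)
    rw [prod_range_succ, ih, hS]
    calc _ = Polynomial.C (1 + X ^ (2 * m + 2)) * S
          - Polynomial.C (X ^ (m + 1)) * (Polynomial.X * S) := by ring
      _ = _ := by
        rw [hY, mul_sum, mul_sum, ← sum_sub_distrib]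
        refine sum_congr rfl fun k hk ↦ ?_
        rw [jacobiTerm_succ (by simpa [Nat.lt_succ_iff] using hk)]
        simp only [map_sub, map_mul]
        ring

theorem qPoch_sq (m : ℕ) :
    qPoch m ^ 2 = ∑ k ∈ range (m + 1), jacobiTerm m k * (2 * k + 1) := by
  have h := congrArg (Polynomial.eval 2) (prod_eq_sum_jacobiTerm_mul_chebyshevW m)
  simp only [Polynomial.eval_prod, Polynomial.eval_finsetSum, Polynomial.eval_sub,
    Polynomial.eval_mul, Polynomial.eval_C, Polynomial.eval_X, eval_two_chebyshevW,
    Int.cast_natCast] at h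
  rw [qPoch, ← prod_pow, ← h]
  exact prod_congr rfl fun i _ ↦ by ring

lemma X_pow_dvd_qPoch_mul_inverse_sub_one {a b : ℕ} (h : a ≤ b) :
    X ^ (a + 1) ∣ qPoch b * Ring.inverse (qPoch a) - 1 := by
  induction b, h using Nat.le_induction with
  | base => simp [qPoch_mul_inverse]
  | succ b hab ih =>
    rw [qPoch_succ, mul_right_comm]
    refine dvd_mul_sub_one ih ?_
    rw [sub_sub_cancel_left, dvd_neg]
    exact pow_dvd_pow X (by omega)

lemma X_pow_dvd_qPoch_mul_centralQBinom_sub_one {m k : ℕ} (hk : k ≤ m) :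
    X ^ (m - k + 1) ∣ qPoch m * centralQBinom m k - 1 := by
  rw [centralQBinom, if_pos hk,
    show ∀ a b c d : ℤ⟦X⟧, a * (b * c * d) = (a * c) * (b * d) from fun _ _ _ _ ↦ by ring]
  exact dvd_mul_sub_one (X_pow_dvd_qPoch_mul_inverse_sub_one (by omega))
    ((pow_dvd_pow X (by omega)).trans (X_pow_dvd_qPoch_mul_inverse_sub_one (by omega)))

def jacobiPoly (m : ℕ) : ℤ⟦X⟧ := ∑ k ∈ range (m + 1), C ((-1) ^ k * (2 * k + 1) : ℤ) * X ^ tri k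

theorem X_pow_dvd_qPoch_pow_three_sub_jacobiPoly (m : ℕ) :
    X ^ (m + 1) ∣ qPoch m ^ 3 - jacobiPoly m := by
  rw [pow_succ (qPoch m), qPoch_sq, jacobiPoly, sum_mul, ← sum_sub_distrib]
  refine dvd_sum fun k hk ↦ ?_
  have hkm : k ≤ m := Nat.lt_succ_iff.mp (mem_range.mp hk)
  have hsplit : jacobiTerm m k * (2 * (k : ℤ⟦X⟧) + 1) * qPoch m
        - C ((-1) ^ k * (2 * k + 1) : ℤ) * X ^ tri k
      = C ((-1) ^ k * (2 * k + 1) : ℤ) * (X ^ tri k * (qPoch m * centralQBinom m k - 1)) := by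
    simp only [jacobiTerm, map_mul, map_pow, map_neg, map_one, map_add, map_natCast, map_ofNat]
    ring
  rw [hsplit]
  refine dvd_mul_of_dvd_right ((pow_dvd_pow X (?_ : m + 1 ≤ tri k + (m - k + 1))).trans ?_) _
  · have := le_tri k
    omega
  · rw [pow_add]
    exact mul_dvd_mul_left _ (X_pow_dvd_qPoch_mul_centralQBinom_sub_one hkm)

/-- `lambertSum m = ∑_{j ≤ m} j qʲ / (1 - qʲ)`, since `expand j (mk 1) = 1 / (1 - qʲ)`. -/
def lambertSum (m : ℕ) : ℤ⟦X⟧ :=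
  ∑ i ∈ range m, ((i + 1 : ℕ) : ℤ⟦X⟧) * (expand (i + 1) i.succ_ne_zero (mk 1 : ℤ⟦X⟧) - 1)

lemma X_mul_derivative_qPoch (m : ℕ) : X * d⁄dX ℤ (qPoch m) = -(lambertSum m * qPoch m) := by
  induction m with
  | zero => simp [qPoch, lambertSum]
  | succ m ih =>
    have hu : X * d⁄dX ℤ (1 - X ^ (m + 1) : ℤ⟦X⟧) = -(((m + 1 : ℕ) : ℤ⟦X⟧) * X ^ (m + 1)) := by
      simp [Derivation.leibniz_pow]
      ring
    have hinv := expand_mk_one_mul_one_sub_X_pow (R := ℤ) (by omega : m + 1 ≠ 0)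
    rw [qPoch_succ, Derivation.leibniz, lambertSum, sum_range_succ, ← lambertSum, smul_eq_mul,
      smul_eq_mul]
    linear_combination (1 - X ^ (m + 1)) * ih + qPoch m * hu
      + ((m + 1 : ℕ) : ℤ⟦X⟧) * qPoch m * hinv

lemma coeff_lambertSum {m n : ℕ} (h : n ≤ m) :
    coeff n (lambertSum m) = ArithmeticFunction.sigma 1 n := by
  rcases n.eq_zero_or_pos with rfl | hn
  · simp [lambertSum]
  have hdiv : n.divisors = {d ∈ range (m + 1) | d ∣ n} := by
    ext d
    simp only [Nat.mem_divisors, mem_filter, mem_range]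
    constructor
    · rintro ⟨hd, -⟩
      exact ⟨by have := Nat.le_of_dvd hn hd; omega, hd⟩
    · rintro ⟨-, hd⟩
      exact ⟨hd, hn.ne'⟩
  rw [ArithmeticFunction.sigma_one_apply, hdiv, sum_filter, sum_range_succ', lambertSum, map_sum]
  push_cast [ite_self, add_zero]
  refine sum_congr rfl fun i _ ↦ ?_
  rw [show ((i : ℤ⟦X⟧) + 1) = C ((i : ℤ) + 1) by simp, coeff_C_mul]
  simp [coeff_expand, hn.ne']

lemma coeff_jacobiPoly_eq_zero {m n : ℕ} (hn : ∀ k, tri k ≠ n) : coeff n (jacobiPoly m) = 0 := by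
  simp only [jacobiPoly, map_sum, coeff_C_mul_X_pow]
  exact sum_eq_zero fun k _ ↦ if_neg (hn k).symm

lemma coeff_X_pow_mul_lambertSum {m n : ℕ} (t : ℕ) (h : n ≤ m) :
    coeff n (X ^ t * lambertSum m) = (ArithmeticFunction.sigma 1 (n - t) : ℤ) := by
  rw [coeff_X_pow_mul', coeff_lambertSum (by omega)]
  split_ifs with ht
  · rfl
  · simp [Nat.sub_eq_zero_of_le (le_of_not_ge ht)]

lemma coeff_lambertSum_mul_jacobiPoly (n : ℕ) :
    coeff n (lambertSum n * jacobiPoly n) = ∑ k ∈ range (n + 1),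
      (-1 : ℤ) ^ k * (2 * k + 1) * ArithmeticFunction.sigma 1 (n - tri k) := by
  simp only [jacobiPoly, mul_sum, map_sum]
  refine sum_congr rfl fun k _ ↦ ?_
  rw [mul_left_comm, coeff_C_mul, mul_comm (lambertSum n), coeff_X_pow_mul_lambertSum _ le_rfl]

/-- The terms with `tri k > n` vanish, since there `n - tri k = 0` and `σ 1 0 = 0`. -/
theorem sum_neg_one_pow_mul_sigma_sub_tri_eq_zero {n : ℕ} (hn : ∀ k, tri k ≠ n) :
    ∑ k ∈ range (n + 1),
      (-1 : ℤ) ^ k * (2 * k + 1) * ArithmeticFunction.sigma 1 (n - tri k) = 0 := by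
  have hJ := X_pow_dvd_qPoch_pow_three_sub_jacobiPoly n
  have hlog : X * d⁄dX ℤ (qPoch n ^ 3) = -3 * (lambertSum n * qPoch n ^ 3) := by
    rw [Derivation.leibniz_pow, smul_eq_mul, nsmul_eq_mul]
    linear_combination (3 * qPoch n ^ 2) * X_mul_derivative_qPoch n
  have hJ' : X ^ (n + 1) ∣ lambertSum n * qPoch n ^ 3 - lambertSum n * jacobiPoly n := by
    rw [← mul_sub]
    exact dvd_mul_of_dvd_right hJ _
  have hcoeff := congrArg (coeff n) hlog
  rw [coeff_X_mul_derivative, coeff_eq_of_X_pow_dvd_sub hJ n.lt_succ_self,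
    coeff_jacobiPoly_eq_zero hn, mul_zero, show (-3 : ℤ⟦X⟧) = C (-3) by simp, coeff_C_mul,
    coeff_eq_of_X_pow_dvd_sub hJ' n.lt_succ_self,
    coeff_lambertSum_mul_jacobiPoly] at hcoeff
  linarith

lemma sum_odd_sq_lt_eq_sum_tri_lt (n : ℕ) (g : ℕ → ℤ) :
    ∑ e ∈ range (8 * n + 1) with Odd e ∧ e ^ 2 < 8 * n + 1, g e
      = ∑ k ∈ range (n + 1) with tri k < n, g (2 * k + 1) := by
  refine (sum_nbij' (fun k ↦ 2 * k + 1) (fun e ↦ e / 2) ?_ ?_ ?_ ?_ fun _ _ ↦ rfl).symm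
  · intro k hk
    simp only [mem_filter, mem_range] at hk ⊢
    have := le_tri k
    exact ⟨by omega, odd_two_mul_add_one k, by rw [two_mul_add_one_sq]; omega⟩
  · intro e he
    simp only [mem_filter, mem_range] at he ⊢
    obtain ⟨-, ⟨k, rfl⟩, hlt⟩ := he
    rw [two_mul_add_one_sq] at hlt
    rw [show (2 * k + 1) / 2 = k by omega]
    have := le_tri k
    omega
  · intro k _
    omega
  · intro e he
    simp only [mem_filter, mem_range] at he
    obtain ⟨-, ⟨k, rfl⟩, -⟩ := he
    omega

end

theorem sum_neg_one_pow_mul_sigma_eq_zero_general (D : ℕ) (hmod : D % 8 = 1)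
    (hsq : ¬ IsSquare D) :
    ∑ e ∈ Finset.filter (fun e => Odd e ∧ e ^ 2 < D) (Finset.range D),
      ((-1 : ℤ) ^ ((e - 1) / 2) * (e : ℤ) *
        (ArithmeticFunction.sigma 1 ((D - e ^ 2) / 8) : ℤ)) = 0 := by
  obtain ⟨n, rfl⟩ : ∃ n, D = 8 * n + 1 := ⟨D / 8, by omega⟩
  have hn : ∀ k, tri k ≠ n := fun k hk ↦ hsq ⟨2 * k + 1, by rw [← sq, two_mul_add_one_sq, hk]⟩
  rw [sum_odd_sq_lt_eq_sum_tri_lt, ← sum_neg_one_pow_mul_sigma_sub_tri_eq_zero hn,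
    ← sum_filter_of_ne (s := range (n + 1)) (p := fun k ↦ tri k < n)]
  · refine sum_congr rfl fun k hk ↦ ?_
    have hlt : tri k < n := (mem_filter.mp hk).2
    rw [show (2 * k + 1 - 1) / 2 = k by omega, two_mul_add_one_sq,
      show (8 * n + 1 - (8 * tri k + 1)) / 8 = n - tri k by omega]
    push_cast
    ring
  · intro k _ hk
    by_contra hlt
    simp [Nat.sub_eq_zero_of_le (not_lt.mp hlt)] at hk

/-- For a positive non-square integer `D ≡ 1 (mod 8)`, the alternating weighted sum
`∑_{0 < e < √D, e odd} (-1)^((e-1)/2) · e · σ₁((D - e²)/8)` vanishes.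
Here `σ₁ n` is the sum of the positive divisors of `n`. -/
theorem sum_neg_one_pow_mul_sigma_eq_zero (D : ℕ) (hD : 0 < D) (hmod : D % 8 = 1)
    (hsq : ¬ IsSquare D) :
    ∑ e ∈ Finset.filter (fun e => Odd e ∧ e ^ 2 < D) (Finset.range D),
      ((-1 : ℤ) ^ ((e - 1) / 2) * (e : ℤ) *
        (ArithmeticFunction.sigma 1 ((D - e ^ 2) / 8) : ℤ)) = 0 :=
  sum_neg_one_pow_mul_sigma_eq_zero_general D hmod hsq
end

section
/- Let T be a 4×4 integer matrix that is self-adjoint with respect to the skew-symmetric form given by the block matrix J = [[0,1,0,0],[-1,0,0,0],[0,0,0,2],[0,0,-2,0]], i.e., Jᵀ·T = Tᵀ·J (equivalently ⟨Tu, v⟩ = ⟨u, Tv⟩ for the bilinear form ⟨u,v⟩ = uᵀJv). Then T has the block form [[e·I₂, 2B],[B*, f·I₂]], where e, f are integers, B is a 2×2 integer matrix, and B* denotes the adjugate of B (for B = [[a,b],[c,d]], B* = [[d,-b],[-c,a]]). -/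
open Matrix

/-- A 4×4 integer matrix `T` that is self-adjoint with respect to the skew-symmetric form
`J = [[0,1,0,0],[-1,0,0,0],[0,0,0,2],[0,0,-2,0]]` (i.e. `⟨Tu, v⟩ = ⟨u, Tv⟩` for the bilinear
form `⟨u,v⟩ = uᵀJv`) has the block form `[[e·I₂, 2B],[B*, f·I₂]]`, where `e, f ∈ ℤ`,
`B` is a 2×2 integer matrix and `B*` is its adjugate. -/
theorem selfadjoint_wrt_J_block_form (T : Matrix (Fin 4) (Fin 4) ℤ)
    (hT : ∀ u v : Fin 4 → ℤ,
      (T.mulVec u) ⬝ᵥ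
        ((!![0,1,0,0; -1,0,0,0; 0,0,0,2; 0,0,-2,0] : Matrix (Fin 4) (Fin 4) ℤ).mulVec v)
      = u ⬝ᵥ ((!![0,1,0,0; -1,0,0,0; 0,0,0,2; 0,0,-2,0] : Matrix (Fin 4) (Fin 4) ℤ).mulVec
          (T.mulVec v))) :
    ∃ (e f : ℤ) (B : Matrix (Fin 2) (Fin 2) ℤ),
      T = !![e, 0, 2 * B 0 0, 2 * B 0 1;
             0, e, 2 * B 1 0, 2 * B 1 1;
             B 1 1, -B 0 1, f, 0;
             -B 1 0, B 0 0, 0, f] := by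
  have h00 := hT (Pi.single 0 1) (Pi.single 0 1)
  have h01 := hT (Pi.single 0 1) (Pi.single 1 1)
  have h02 := hT (Pi.single 0 1) (Pi.single 2 1)
  have h03 := hT (Pi.single 0 1) (Pi.single 3 1)
  have h10 := hT (Pi.single 1 1) (Pi.single 0 1)
  have h11 := hT (Pi.single 1 1) (Pi.single 1 1)
  have h12 := hT (Pi.single 1 1) (Pi.single 2 1)
  have h13 := hT (Pi.single 1 1) (Pi.single 3 1)
  have h20 := hT (Pi.single 2 1) (Pi.single 0 1)
  have h21 := hT (Pi.single 2 1) (Pi.single 1 1)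
  have h22 := hT (Pi.single 2 1) (Pi.single 2 1)
  have h23 := hT (Pi.single 2 1) (Pi.single 3 1)
  have h30 := hT (Pi.single 3 1) (Pi.single 0 1)
  have h31 := hT (Pi.single 3 1) (Pi.single 1 1)
  have h32 := hT (Pi.single 3 1) (Pi.single 2 1)
  have h33 := hT (Pi.single 3 1) (Pi.single 3 1)
  simp [Matrix.mulVec, dotProduct, Fin.sum_univ_four, Pi.single_apply, Matrix.vecHead, Matrix.vecTail, Function.comp] at h00 h01 h02 h03 h10 h11 h12 h13 h20 h21 h22 h23 h30 h31 h32 h33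
  refine ⟨T 0 0, T 2 2, !![T 3 1, -T 2 1; -T 3 0, T 2 0], ?_⟩
  ext i j
  fin_cases i <;> fin_cases j <;> simp <;> linarith
end

section
/- Let D be a positive integer that is not a perfect square, and let a₁, a₂, b₁, b₂ be complex numbers such that a₁ ≠ 0. Suppose B' is a 2×2 matrix with entries in Q(√D) of the form B/λ where B is a 2×2 rational matrix with det(B) ≠ 0 and λ = (e + √D)/2 for some integer e with λ ∉ Q. Then the Q-linear map from Q⁴ to Q(√D)² sending v to (I₂ | B')·v is injective. -/
/-!
Write `v = (x, y)` with `x, y ∈ ℚ²`, so the map is `(x, y) ↦ x + λ⁻¹ • B y`. Since `λ⁻¹` is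
irrational, `1` and `λ⁻¹` are linearly independent over `ℚ`, so each coordinate of the image
determines the corresponding coordinates of `x` and of `B y`; and `B y` determines `y` because
`det B ≠ 0`.
-/

open Matrix

theorem Irrational.ratCast_add_mul_ratCast_inj {l : ℝ} (hl : Irrational l) {q q' r r' : ℚ} :
    (q : ℝ) + l * r = q' + l * r' ↔ q = q' ∧ r = r' := by
  refine ⟨fun h => ?_, fun ⟨hq, hr⟩ => by rw [hq, hr]⟩
  have hr : r = r' := by
    by_contra hne
    have hsub : ((r - r' : ℚ) : ℝ) ≠ 0 := by exact_mod_cast sub_ne_zero.mpr hne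
    refine hl ⟨(q' - q) / (r - r'), ?_⟩
    push_cast at hsub ⊢
    rw [div_eq_iff hsub]
    linarith
  subst hr
  exact ⟨by exact_mod_cast add_right_cancel h, rfl⟩

theorem Irrational.injective_ratCast_add_inv_smul_mulVec {m n : Type*} [Fintype n] {l : ℝ}
    (hl : Irrational l) {B : Matrix m n ℚ} (hB : Function.Injective B.mulVec) :
    Function.Injective fun p : (m → ℚ) × (n → ℚ) =>
      (fun i => (p.1 i : ℝ)) + (l⁻¹ • B.map ((↑) : ℚ → ℝ)) *ᵥ fun j => (p.2 j : ℝ) := by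
  rintro ⟨x, y⟩ ⟨x', y'⟩ h
  have hcoord (i : m) : x i = x' i ∧ (B *ᵥ y) i = (B *ᵥ y') i := by
    refine hl.inv.ratCast_add_mul_ratCast_inj.mp ?_
    have := congrFun h i
    simp only [Pi.add_apply, smul_mulVec, Pi.smul_apply, smul_eq_mul] at this
    simpa only [← Rat.coe_castHom, RingHom.map_mulVec, Function.comp_def] using this
  exact Prod.ext (funext fun i => (hcoord i).1) (hB (funext fun i => (hcoord i).2))

theorem concat_identity_matrix_injective_general
    (B : Matrix (Fin 2) (Fin 2) ℚ) (hB : B.det ≠ 0)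
    (l : ℝ) (hirr : Irrational l)
    (B' : Matrix (Fin 2) (Fin 2) ℝ) (hB' : B' = l⁻¹ • (B.map (fun x => (x : ℝ)))) :
    Function.Injective (fun v : Fin 4 → ℚ => fun i : Fin 2 =>
      (v (Fin.castAdd 2 i) : ℝ) + ∑ j : Fin 2, B' i j * (v (Fin.natAdd 2 j) : ℝ)) := by
  subst hB'
  exact (hirr.injective_ratCast_add_inv_smul_mulVec (mulVec_injective_of_det_ne_zero hB)).comp
    (Fin.appendEquiv 2 2).symm.injective

/-- Let `D` be a positive non-square integer, `a₁, a₂, b₁, b₂` complex numbers with `a₁ ≠ 0`,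
and `B' = (1/λ)·B` a 2×2 real matrix, where `B` is a rational matrix with `det B ≠ 0` and
`λ = (e + √D)/2` is irrational. Then the `ℚ`-linear map `ℚ⁴ → ℚ(√D)² ⊆ ℝ²` sending
`v` to `(I₂ | B')·v` is injective. -/
theorem concat_identity_matrix_injective (D : ℕ) (hD : 0 < D) (hsq : ¬ IsSquare D)
    (a₁ a₂ b₁ b₂ : ℂ) (ha₁ : a₁ ≠ 0)
    (B : Matrix (Fin 2) (Fin 2) ℚ) (hB : B.det ≠ 0)
    (e : ℤ) (l : ℝ) (hl : l = ((e : ℝ) + Real.sqrt D) / 2) (hirr : Irrational l)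
    (B' : Matrix (Fin 2) (Fin 2) ℝ) (hB' : B' = l⁻¹ • (B.map (fun x => (x : ℝ)))) :
    Function.Injective (fun v : Fin 4 → ℚ => fun i : Fin 2 =>
      (v (Fin.castAdd 2 i) : ℝ) + ∑ j : Fin 2, B' i j * (v (Fin.natAdd 2 j) : ℝ)) :=
  concat_identity_matrix_injective_general B hB l hirr B' hB'
end

section
/- Let D > 0 be not a perfect square and (1,2)-primitive, meaning D ≡ 0, 1, or 4 (mod 8) and there is no integer f > 1 with D = f²D' for some D' ≡ 0, 1, or 4 (mod 8). Let e be an integer with e² < D and e² ≡ D (mod 8). Then the number of triples (a,b,d) of integers with a > 0, d > 0, 0 ≤ b < a, ad = (D - e²)/8, and gcd(a,b,d,e) = 1 equals σ₁((D - e²)/8). -/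
/-!
The triples `(a, b, d)` with `a, d > 0`, `0 ≤ b < a` and `ad = n` are the Hermite normal forms
`[[a, b], [0, d]]` of determinant `n`; for each divisor `a` of `n` there are `a` choices of `b`,
so there are `σ₁(n)` of them. The gcd condition is automatic: a common divisor `f > 1` of
`a, d, e` would give `D = f² (e₁² + 8 a₁ d₁)` with `e₁² + 8 a₁ d₁ ≡ 0, 1, 4 (mod 8)`, against
primitivity.
-/

open Finset

theorem Int.sq_emod_eight (x : ℤ) : x ^ 2 % 8 = 0 ∨ x ^ 2 % 8 = 1 ∨ x ^ 2 % 8 = 4 := by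
  have h : (x % 8) ^ 2 % 8 = x ^ 2 % 8 := (Int.mod_modEq x 8).pow 2
  have h0 := Int.emod_nonneg x (by norm_num : (8:ℤ) ≠ 0)
  have h8 := Int.emod_lt_of_pos x (by norm_num : (0:ℤ) < 8)
  rw [← h]
  interval_cases x % 8 <;> simp

theorem gcd_eq_one_of_primitive {D a d e : ℤ} (b : ℤ)
    (hprim : ¬ ∃ f D' : ℤ, 1 < f ∧ D = f ^ 2 * D' ∧
      (D' % 8 = 0 ∨ D' % 8 = 1 ∨ D' % 8 = 4))
    (hD : D = e ^ 2 + 8 * (a * d)) (ha : a ≠ 0) :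
    Int.gcd a (Int.gcd b (Int.gcd d e)) = 1 := by
  set g := Int.gcd a (Int.gcd b (Int.gcd d e))
  have hgde : (g : ℤ) ∣ Int.gcd d e :=
    (Int.gcd_dvd_right a _).trans (Int.gcd_dvd_right b _)
  obtain ⟨a₁, ha₁⟩ : (g : ℤ) ∣ a := Int.gcd_dvd_left a _
  obtain ⟨d₁, hd₁⟩ : (g : ℤ) ∣ d := hgde.trans (Int.gcd_dvd_left _ _)
  obtain ⟨e₁, he₁⟩ : (g : ℤ) ∣ e := hgde.trans (Int.gcd_dvd_right _ _)
  have hg : g ≠ 0 := fun h => ha (by simp [ha₁, h])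
  by_contra hg1
  refine hprim ⟨g, e₁ ^ 2 + 8 * (a₁ * d₁), by omega,
    by rw [hD, ha₁, hd₁, he₁]; ring, ?_⟩
  have := Int.sq_emod_eight e₁
  omega

def hermiteTriples (n : ℤ) : Set (ℤ × ℤ × ℤ) :=
  {p | 0 < p.1 ∧ 0 < p.2.2 ∧ 0 ≤ p.2.1 ∧ p.2.1 < p.1 ∧ p.1 * p.2.2 = n}

theorem hermiteTriples_eq_image (n : ℕ) :
    hermiteTriples n = ((n.divisorsAntidiagonal.sigma fun q => range q.1).image
      fun x => ((x.1.1 : ℤ), (x.2 : ℤ), (x.1.2 : ℤ)) : Set (ℤ × ℤ × ℤ)) := by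
  ext ⟨a, b, d⟩
  simp only [hermiteTriples, Set.mem_ofPred_eq, coe_image, coe_sigma, Set.mem_image,
    Set.mem_sigma_iff, mem_coe, Nat.mem_divisorsAntidiagonal, mem_range, Prod.mk.injEq,
    Sigma.exists, Prod.exists]
  constructor
  · rintro ⟨ha, hd, hb, hba, had⟩
    lift a to ℕ using ha.le
    lift b to ℕ using hb
    lift d to ℕ using hd.le
    norm_cast at *
    exact ⟨a, d, b, ⟨⟨had, had ▸ by positivity⟩, hba⟩, rfl, rfl, rfl⟩
  · rintro ⟨a, d, b, ⟨⟨rfl, hn⟩, hba⟩, rfl, rfl, rfl⟩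
    have ha : 0 < a := Nat.pos_of_ne_zero (left_ne_zero_of_mul hn)
    have hd : 0 < d := Nat.pos_of_ne_zero (right_ne_zero_of_mul hn)
    exact ⟨by exact_mod_cast ha, by exact_mod_cast hd, by positivity, by exact_mod_cast hba,
      (Nat.cast_mul a d).symm⟩

theorem hermiteTriples_finite (n : ℕ) : (hermiteTriples n).Finite := by
  rw [hermiteTriples_eq_image]
  exact finite_toSet _

theorem ncard_hermiteTriples (n : ℕ) :
    (hermiteTriples n).ncard = ArithmeticFunction.sigma 1 n := by
  rw [hermiteTriples_eq_image, Set.ncard_coe_finset, card_image_of_injective, card_sigma,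
    ArithmeticFunction.sigma_one_apply]
  · simp_rw [card_range]
    exact Nat.sum_divisorsAntidiagonal fun a _ => a
  · rintro ⟨⟨a, d⟩, b⟩ ⟨⟨a', d'⟩, b'⟩ h
    simp only [Prod.mk.injEq, Nat.cast_inj] at h
    obtain ⟨rfl, rfl, rfl⟩ := h
    rfl

theorem prototype_count_primitive_general (D e : ℤ)
    (hprim : ¬ ∃ f D' : ℤ, 1 < f ∧ D = f ^ 2 * D' ∧
      (D' % 8 = 0 ∨ D' % 8 = 1 ∨ D' % 8 = 4))
    (hcong : e ^ 2 % 8 = D % 8)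
    (n : ℕ) (hn : (n : ℤ) = (D - e ^ 2) / 8) :
    {p : ℤ × ℤ × ℤ | 0 < p.1 ∧ 0 < p.2.2 ∧ 0 ≤ p.2.1 ∧ p.2.1 < p.1 ∧
        p.1 * p.2.2 = (D - e ^ 2) / 8 ∧
        Int.gcd p.1 (Int.gcd p.2.1 (Int.gcd p.2.2 e)) = 1}.Finite ∧
      {p : ℤ × ℤ × ℤ | 0 < p.1 ∧ 0 < p.2.2 ∧ 0 ≤ p.2.1 ∧ p.2.1 < p.1 ∧
        p.1 * p.2.2 = (D - e ^ 2) / 8 ∧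
        Int.gcd p.1 (Int.gcd p.2.1 (Int.gcd p.2.2 e)) = 1}.ncard
        = ArithmeticFunction.sigma 1 n := by
  have hset : {p : ℤ × ℤ × ℤ | 0 < p.1 ∧ 0 < p.2.2 ∧ 0 ≤ p.2.1 ∧ p.2.1 < p.1 ∧
      p.1 * p.2.2 = (D - e ^ 2) / 8 ∧
      Int.gcd p.1 (Int.gcd p.2.1 (Int.gcd p.2.2 e)) = 1} = hermiteTriples n := by
    ext ⟨a, b, d⟩
    simp only [hermiteTriples, Set.mem_ofPred_eq, ← hn]
    refine ⟨fun ⟨ha, hd, hb, hba, had, _⟩ => ⟨ha, hd, hb, hba, had⟩,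
      fun ⟨ha, hd, hb, hba, had⟩ => ⟨ha, hd, hb, hba, had, ?_⟩⟩
    exact gcd_eq_one_of_primitive b hprim (by omega) ha.ne'
  rw [hset]
  exact ⟨hermiteTriples_finite n, ncard_hermiteTriples n⟩

/-- Let `D > 0` be a non-square `(1,2)`-primitive discriminant (`D ≡ 0,1,4 (mod 8)` and
there is no `f > 1` with `D = f²·D'` for a discriminant `D' ≡ 0,1,4 (mod 8)`), and let
`e` be an integer with `e² < D` and `e² ≡ D (mod 8)`. Then the number of triples `(a,b,d)`
with `a > 0`, `d > 0`, `0 ≤ b < a`, `ad = (D - e²)/8` and `gcd(a,b,d,e) = 1` equals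
`σ₁((D - e²)/8)`. -/
theorem prototype_count_primitive (D e : ℤ) (hD : 0 < D) (hsq : ¬ IsSquare D)
    (hmod : D % 8 = 0 ∨ D % 8 = 1 ∨ D % 8 = 4)
    (hprim : ¬ ∃ f D' : ℤ, 1 < f ∧ D = f ^ 2 * D' ∧
      (D' % 8 = 0 ∨ D' % 8 = 1 ∨ D' % 8 = 4))
    (he : e ^ 2 < D) (hcong : e ^ 2 % 8 = D % 8)
    (n : ℕ) (hn : (n : ℤ) = (D - e ^ 2) / 8) :
    {p : ℤ × ℤ × ℤ | 0 < p.1 ∧ 0 < p.2.2 ∧ 0 ≤ p.2.1 ∧ p.2.1 < p.1 ∧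
        p.1 * p.2.2 = (D - e ^ 2) / 8 ∧
        Int.gcd p.1 (Int.gcd p.2.1 (Int.gcd p.2.2 e)) = 1}.Finite ∧
      {p : ℤ × ℤ × ℤ | 0 < p.1 ∧ 0 < p.2.2 ∧ 0 ≤ p.2.1 ∧ p.2.1 < p.1 ∧
        p.1 * p.2.2 = (D - e ^ 2) / 8 ∧
        Int.gcd p.1 (Int.gcd p.2.1 (Int.gcd p.2.2 e)) = 1}.ncard
        = ArithmeticFunction.sigma 1 n :=
  prototype_count_primitive_general D e hprim hcong n hn
end
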